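/- arXiv:2009.08417 — 2 statements merged into one kernel-verified Lean document; each statement's English description precedes it below -/
import Mathlib

section
/- Let G, m₁, m₂, r be real numbers with G > 0, m₁ > 0, m₂ > 0, r > 0, let α, β, μ, ω be real with μ ≥ 0, and set m = m₁ + m₂. Define trajectories γ₁, γ₂ : ℝ → EuclideanSpace ℝ (Fin 3) by γ₁(t) = (m₂/m)·r·n(t) and γ₂(t) = −(m₁/m)·r·n(t), where n(t) = (cos ωt, sin ωt, 0). Then γ₁, γ₂ satisfy the Yukawa-corrected two-body equations of motion γ̈ᵢ(t) = −G·mⱼ·(α + β·(1 + μ·d(t))·exp(−μ·d(t)))·(γᵢ(t) − γⱼ(t))/d(t)³, where d(t) = ‖γᵢ(t) − γⱼ(t)‖ (for {i,j} = {1,2}, all t ∈ ℝ), if and only if ω² = (G·m/r³)·(α + β·(1 + μr)·exp(−μr)). This is the angular frequency of circular orbits in linearized area metric gravity, whose static potential is a Coulomb term α/d plus a Yukawa term β·e^{−μd}/d. -/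
/-!
Both bodies move on circles about the centre of mass, so each acceleration is `-ω²` times the
position, which is parallel to the separation `γ₁ - γ₂ = r • n(t)`, of constant length `r`.
Comparing the coefficients of the unit vector `n(t)` reduces each equation of motion to the
same scalar identity `ω² = G m (α + β (1 + μ r) e^{-μ r}) / r³`.
-/

/-- The radial unit vector `n(t) = (cos ωt, sin ωt, 0)` of a circular orbit. -/
noncomputable def nvec (ω t : ℝ) : EuclideanSpace ℝ (Fin 3) :=
  (WithLp.equiv 2 (Fin 3 → ℝ)).symm ![Real.cos (ω * t), Real.sin (ω * t), 0]

open Real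

section Rotation

variable {E : Type*} [NormedAddCommGroup E] [NormedSpace ℝ E] (u v : E) (ω : ℝ)

theorem hasDerivAt_cos_smul_add_sin_smul (t : ℝ) :
    HasDerivAt (fun s => cos (ω * s) • u + sin (ω * s) • v)
      (ω • (cos (ω * t) • v + sin (ω * t) • -u)) t := by
  have hlin : HasDerivAt (fun s => ω * s) ω t := by simpa using (hasDerivAt_id t).const_mul ω
  have := (((hasDerivAt_cos _).comp t hlin).smul_const u).add
    (((hasDerivAt_sin _).comp t hlin).smul_const v)
  exact this.congr_deriv (by module)

theorem deriv_cos_smul_add_sin_smul :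
    deriv (fun s => cos (ω * s) • u + sin (ω * s) • v) =
      fun t => ω • (cos (ω * t) • v + sin (ω * t) • -u) :=
  funext fun t => (hasDerivAt_cos_smul_add_sin_smul u v ω t).deriv

theorem deriv_deriv_cos_smul_add_sin_smul (t : ℝ) :
    deriv (deriv fun s => cos (ω * s) • u + sin (ω * s) • v) t =
      -(ω ^ 2) • (cos (ω * t) • u + sin (ω * t) • v) := by
  rw [deriv_cos_smul_add_sin_smul]
  refine ((hasDerivAt_cos_smul_add_sin_smul v (-u) ω t).const_smul ω).deriv.trans ?_
  module

end Rotation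

theorem nvec_eq_cos_smul_add_sin_smul (ω t : ℝ) :
    nvec ω t =
      cos (ω * t) • EuclideanSpace.single 0 1 + sin (ω * t) • EuclideanSpace.single 1 1 := by
  ext i
  fin_cases i <;> simp [nvec]

theorem norm_nvec (ω t : ℝ) : ‖nvec ω t‖ = 1 := by
  simp [EuclideanSpace.norm_eq, nvec, Fin.sum_univ_three]

theorem nvec_ne_zero (ω t : ℝ) : nvec ω t ≠ 0 :=
  norm_ne_zero_iff.mp (by rw [norm_nvec]; exact one_ne_zero)

theorem norm_smul_nvec (c ω t : ℝ) : ‖c • nvec ω t‖ = |c| := by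
  rw [norm_smul, norm_nvec, mul_one, Real.norm_eq_abs]

theorem deriv_deriv_smul_nvec (c ω t : ℝ) :
    deriv (deriv fun s => c • nvec ω s) t = -(ω ^ 2 * c) • nvec ω t := by
  have h : (fun s => c • nvec ω s) = fun s => cos (ω * s) • c • EuclideanSpace.single 0 1 +
      sin (ω * s) • c • EuclideanSpace.single 1 1 := by
    funext s
    rw [nvec_eq_cos_smul_add_sin_smul]
    module
  rw [h, deriv_deriv_cos_smul_add_sin_smul, nvec_eq_cos_smul_add_sin_smul]
  module

-- `c = M s / m` says that the centre of mass of the two bodies is at rest at the origin.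
theorem forall_deriv_deriv_eq_smul_nvec_iff {γ : ℝ → EuclideanSpace ℝ (Fin 3)}
    {c s M m G K r ω : ℝ} (hγ : ∀ t, γ t = c • nvec ω t) (hc : c = M * s / m)
    (hM : M ≠ 0) (hs : s ≠ 0) (hm : m ≠ 0) :
    (∀ t, deriv (deriv γ) t = (-(G * M * K / r ^ 3)) • (s • nvec ω t)) ↔
      ω ^ 2 = G * m / r ^ 3 * K := by
  have hc0 : c ≠ 0 := hc ▸ div_ne_zero (mul_ne_zero hM hs) hm
  have hforce : G * M * K / r ^ 3 * s = G * m / r ^ 3 * K * c := by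
    rw [hc]
    field_simp
  simp only [funext hγ, deriv_deriv_smul_nvec, smul_smul, smul_left_inj (nvec_ne_zero _ _),
    forall_const, neg_mul, neg_inj, hforce, mul_left_inj' hc0]

theorem circular_orbit_yukawa_iff_general (G m₁ m₂ r : ℝ) (h1 : 0 < m₁)
    (h2 : 0 < m₂) (hr : 0 < r) (α β μ ω : ℝ)
    (m : ℝ) (hm : m = m₁ + m₂)
    (γ₁ γ₂ : ℝ → EuclideanSpace ℝ (Fin 3))
    (hγ₁ : ∀ t, γ₁ t = ((m₂ / m) * r) • nvec ω t)
    (hγ₂ : ∀ t, γ₂ t = (-((m₁ / m) * r)) • nvec ω t) :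
    ((∀ t, deriv (deriv γ₁) t =
        (-(G * m₂ * (α + β * (1 + μ * ‖γ₁ t - γ₂ t‖) *
            Real.exp (-(μ * ‖γ₁ t - γ₂ t‖))) / ‖γ₁ t - γ₂ t‖ ^ 3)) • (γ₁ t - γ₂ t)) ∧
     (∀ t, deriv (deriv γ₂) t =
        (-(G * m₁ * (α + β * (1 + μ * ‖γ₂ t - γ₁ t‖) *
            Real.exp (-(μ * ‖γ₂ t - γ₁ t‖))) / ‖γ₂ t - γ₁ t‖ ^ 3)) • (γ₂ t - γ₁ t))) ↔
    ω ^ 2 = (G * m / r ^ 3) * (α + β * (1 + μ * r) * Real.exp (-(μ * r))) := by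
  have hm0 : m ≠ 0 := by rw [hm]; positivity
  have hd₁ : ∀ t, γ₁ t - γ₂ t = r • nvec ω t := fun t => by
    rw [hγ₁, hγ₂, ← sub_smul]
    congr 1
    field_simp
    linear_combination -hm
  have hd₂ : ∀ t, γ₂ t - γ₁ t = (-r) • nvec ω t := fun t => by
    rw [← neg_sub, hd₁, neg_smul]
  simp only [hd₁, hd₂, norm_smul_nvec, abs_neg, abs_of_pos hr]
  rw [forall_deriv_deriv_eq_smul_nvec_iff hγ₁ (by ring) h2.ne' hr.ne' hm0,
    forall_deriv_deriv_eq_smul_nvec_iff hγ₂ (by ring) h1.ne' (neg_ne_zero.mpr hr.ne') hm0,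
    and_self]

/-- Circular trajectories `γ₁(t) = (m₂/m)·r·n(t)`, `γ₂(t) = −(m₁/m)·r·n(t)` solve the
Yukawa-corrected two-body equations of motion of linearized area metric gravity
(Coulomb potential `α/d` plus Yukawa potential `β·e^{−μd}/d`) if and only if
`ω² = (G·m/r³)·(α + β·(1 + μr)·e^{−μr})`. -/
theorem circular_orbit_yukawa_iff (G m₁ m₂ r : ℝ) (hG : 0 < G) (h1 : 0 < m₁)
    (h2 : 0 < m₂) (hr : 0 < r) (α β μ ω : ℝ) (hμ : 0 ≤ μ)
    (m : ℝ) (hm : m = m₁ + m₂)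
    (γ₁ γ₂ : ℝ → EuclideanSpace ℝ (Fin 3))
    (hγ₁ : ∀ t, γ₁ t = ((m₂ / m) * r) • nvec ω t)
    (hγ₂ : ∀ t, γ₂ t = (-((m₁ / m) * r)) • nvec ω t) :
    ((∀ t, deriv (deriv γ₁) t =
        (-(G * m₂ * (α + β * (1 + μ * ‖γ₁ t - γ₂ t‖) *
            Real.exp (-(μ * ‖γ₁ t - γ₂ t‖))) / ‖γ₁ t - γ₂ t‖ ^ 3)) • (γ₁ t - γ₂ t)) ∧
     (∀ t, deriv (deriv γ₂) t =
        (-(G * m₁ * (α + β * (1 + μ * ‖γ₂ t - γ₁ t‖) *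
            Real.exp (-(μ * ‖γ₂ t - γ₁ t‖))) / ‖γ₂ t - γ₁ t‖ ^ 3)) • (γ₂ t - γ₁ t))) ↔
    ω ^ 2 = (G * m / r ^ 3) * (α + β * (1 + μ * r) * Real.exp (-(μ * r))) :=
  circular_orbit_yukawa_iff_general G m₁ m₂ r h1 h2 hr α β μ ω m hm γ₁ γ₂ hγ₁ hγ₂
end

section
/- Let ν, ω₀ be real numbers with 0 < ω₀ < ν, and set κ = √(ν² − ω₀²). Define u : ℝ × EuclideanSpace ℝ (Fin 3) → ℝ by u(t,x) = exp(−κ‖x‖)·cos(ω₀ t)/‖x‖. Then for all t ∈ ℝ and all x ≠ 0, ∂ₜ²u(t,x) − Δₓu(t,x) + ν²·u(t,x) = 0: below the threshold ω₀ = ν, the massive wave equation admits only exponentially damped (non-radiating) spherical solutions oscillating in coordinate time. -/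
/-!
For fixed `t` the field is `cos(ω₀ t)` times the Yukawa potential `e^{-κr}/r`, and in three
dimensions the Laplacian of a radial function `φ(r)` is `φ'' + 2φ'/r`. For `φ = e^{-κr}/r` this gives
`Δφ = κ²φ` away from the origin, while `∂ₜ²` multiplies `cos(ω₀ t)` by `-ω₀²`; since
`κ² = ν² - ω₀²` the three terms cancel.
-/

/-- The spatial Laplacian of `f : EuclideanSpace ℝ (Fin 3) → ℝ` at `x`: the sum over
`i` of the second partial derivatives of `f` in the `i`-th coordinate direction. -/
noncomputable def laplacian3 (f : EuclideanSpace ℝ (Fin 3) → ℝ)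
    (x : EuclideanSpace ℝ (Fin 3)) : ℝ :=
  ∑ i : Fin 3,
    fderiv ℝ (fun y => fderiv ℝ f y (EuclideanSpace.single i 1)) x
      (EuclideanSpace.single i 1)

open Real Filter Topology

section RadialCalculus

variable {F : Type*} [NormedAddCommGroup F] [InnerProductSpace ℝ F]

theorem hasFDerivAt_norm_of_ne_zero {x : F} (hx : x ≠ 0) :
    HasFDerivAt (‖·‖) (‖x‖⁻¹ • innerSL ℝ x) x := by
  have h := (hasStrictFDerivAt_norm_sq x).hasFDerivAt.sqrt (by positivity)
  simp only [sqrt_sq (norm_nonneg _)] at h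
  convert h using 1
  ext v
  simp only [smul_apply, innerSL_apply_apply, smul_eq_mul, nsmul_eq_mul, Nat.cast_ofNat]
  field_simp

theorem HasDerivAt.hasFDerivAt_comp_norm {φ : ℝ → ℝ} {d : ℝ} {x : F} (hφ : HasDerivAt φ d ‖x‖)
    (hx : x ≠ 0) : HasFDerivAt (fun y => φ ‖y‖) ((d / ‖x‖) • innerSL ℝ x) x := by
  rw [div_eq_mul_inv, ← smul_smul]
  exact hφ.comp_hasFDerivAt x (hasFDerivAt_norm_of_ne_zero hx)

end RadialCalculus

section EuclideanRadial

variable {n : ℕ} {φ φ' : ℝ → ℝ} {x : EuclideanSpace ℝ (Fin n)}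

theorem fderiv_comp_norm_single {d : ℝ} (hφ : HasDerivAt φ d ‖x‖) (hx : x ≠ 0) (i : Fin n) :
    fderiv ℝ (fun y : EuclideanSpace ℝ (Fin n) => φ ‖y‖) x (EuclideanSpace.single i 1)
      = d / ‖x‖ * x i := by
  rw [(hφ.hasFDerivAt_comp_norm hx).fderiv]
  simp [EuclideanSpace.inner_single_right]

theorem fderiv_fderiv_comp_norm_single {φ'' : ℝ} (hφ : ∀ᶠ s in 𝓝 ‖x‖, HasDerivAt φ (φ' s) s)
    (hφ' : HasDerivAt φ' φ'' ‖x‖) (hx : x ≠ 0) (i : Fin n) :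
    fderiv ℝ (fun y => fderiv ℝ (fun z : EuclideanSpace ℝ (Fin n) => φ ‖z‖) y
      (EuclideanSpace.single i 1)) x (EuclideanSpace.single i 1)
      = (φ'' - φ' ‖x‖ / ‖x‖) / ‖x‖ ^ 2 * x i ^ 2 + φ' ‖x‖ / ‖x‖ := by
  have hr : ‖x‖ ≠ 0 := norm_ne_zero_iff.mpr hx
  have hpartial : (fun y => fderiv ℝ (fun z : EuclideanSpace ℝ (Fin n) => φ ‖z‖) y
      (EuclideanSpace.single i 1)) =ᶠ[𝓝 x] fun y => φ' ‖y‖ / ‖y‖ * y i := by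
    filter_upwards [(continuous_norm.tendsto x).eventually hφ, eventually_ne_nhds hx] with y hy hy0
    exact fderiv_comp_norm_single hy hy0 i
  have hquot : HasDerivAt (fun s => φ' s / s) ((φ'' * ‖x‖ - φ' ‖x‖ * 1) / ‖x‖ ^ 2) ‖x‖ :=
    hφ'.div (hasDerivAt_id _) hr
  have hcoord : HasFDerivAt (fun y : EuclideanSpace ℝ (Fin n) => y i)
      (EuclideanSpace.proj i : EuclideanSpace ℝ (Fin n) →L[ℝ] ℝ) x :=
    (EuclideanSpace.proj (𝕜 := ℝ) i : EuclideanSpace ℝ (Fin n) →L[ℝ] ℝ).hasFDerivAt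
  rw [hpartial.fderiv_eq, ((hquot.hasFDerivAt_comp_norm hx).fun_mul hcoord).fderiv]
  simp only [mul_one, add_apply, smul_apply, PiLp.proj_apply, PiLp.single_eq_same, smul_eq_mul,
    coe_innerSL_apply, EuclideanSpace.inner_single_right, ringHom_apply, one_mul]
  field_simp
  ring

end EuclideanRadial

theorem laplacian3_comp_norm {φ φ' : ℝ → ℝ} {φ'' : ℝ} {x : EuclideanSpace ℝ (Fin 3)}
    (hφ : ∀ᶠ s in 𝓝 ‖x‖, HasDerivAt φ (φ' s) s) (hφ' : HasDerivAt φ' φ'' ‖x‖) (hx : x ≠ 0) :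
    laplacian3 (fun y => φ ‖y‖) x = φ'' + 2 * φ' ‖x‖ / ‖x‖ := by
  have hr : ‖x‖ ≠ 0 := norm_ne_zero_iff.mpr hx
  have hsum : ∑ i, x i ^ 2 = ‖x‖ ^ 2 := by simp [EuclideanSpace.norm_sq_eq]
  simp only [laplacian3, fderiv_fderiv_comp_norm_single hφ hφ' hx]
  rw [Finset.sum_add_distrib, ← Finset.mul_sum, hsum]
  simp only [Finset.sum_const, Finset.card_univ, Fintype.card_fin, nsmul_eq_mul, Nat.cast_ofNat]
  field_simp
  ring

theorem hasDerivAt_exp_neg_mul (κ s : ℝ) :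
    HasDerivAt (fun s => exp (-(κ * s))) (-κ * exp (-(κ * s))) s := by
  simpa [mul_comm] using ((hasDerivAt_id s).const_mul κ).neg.exp

theorem laplacian3_yukawa (κ c : ℝ) {x : EuclideanSpace ℝ (Fin 3)} (hx : x ≠ 0) :
    laplacian3 (fun y => exp (-(κ * ‖y‖)) * c / ‖y‖) x = κ ^ 2 * (exp (-(κ * ‖x‖)) * c / ‖x‖) := by
  have hr : ‖x‖ ≠ 0 := norm_ne_zero_iff.mpr hx
  have hφ (s : ℝ) (hs : s ≠ 0) : HasDerivAt (fun s => exp (-(κ * s)) * c / s)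
      (-(c * exp (-(κ * s)) * (κ * s + 1)) / s ^ 2) s := by
    refine (((hasDerivAt_exp_neg_mul κ s).mul_const c).div (hasDerivAt_id' s) hs).congr_deriv ?_
    field_simp
    ring
  have hφ' : HasDerivAt (fun s => -(c * exp (-(κ * s)) * (κ * s + 1)) / s ^ 2)
      (c * exp (-(κ * ‖x‖)) * (κ ^ 2 * ‖x‖ ^ 2 + 2 * κ * ‖x‖ + 2) / ‖x‖ ^ 3) ‖x‖ := by
    refine ((((hasDerivAt_exp_neg_mul κ ‖x‖).const_mul c).fun_mul
      (((hasDerivAt_id' ‖x‖).const_mul κ).add_const 1)).fun_neg.div (hasDerivAt_pow 2 ‖x‖)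
      (pow_ne_zero 2 hr)).congr_deriv ?_
    field_simp
    ring
  rw [laplacian3_comp_norm ((eventually_ne_nhds hr).mono hφ) hφ' hx]
  field_simp
  ring

theorem deriv_deriv_mul_cos_mul (a ω t : ℝ) :
    deriv (deriv fun s => a * cos (ω * s)) t = -(ω ^ 2 * (a * cos (ω * t))) := by
  have hcos (s : ℝ) : HasDerivAt (fun s => a * cos (ω * s)) (-(a * ω) * sin (ω * s)) s :=
    ((((hasDerivAt_id' s).const_mul ω).cos).const_mul a).congr_deriv (by ring)
  have hsin : HasDerivAt (fun s => -(a * ω) * sin (ω * s)) (-(a * ω) * (cos (ω * t) * ω)) t :=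
    ((((hasDerivAt_id' t).const_mul ω).sin).const_mul (-(a * ω))).congr_deriv (by ring)
  rw [funext fun s => (hcos s).deriv, hsin.deriv]
  ring

/-- Below the threshold `ω₀ = ν`, the massive wave equation `□u + ν²u = 0` admits the
exponentially damped (non-radiating) spherical solution
`u(t,x) = e^{−κ‖x‖} cos(ω₀t)/‖x‖` with `κ = √(ν² − ω₀²)`, oscillating in coordinate
time. -/
theorem massive_wave_below_threshold (ν ω₀ : ℝ) (h0 : 0 < ω₀) (h1 : ω₀ < ν)
    (κ : ℝ) (hκ : κ = Real.sqrt (ν ^ 2 - ω₀ ^ 2))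
    (u : ℝ × EuclideanSpace ℝ (Fin 3) → ℝ)
    (hu : ∀ t x, u (t, x) = Real.exp (-(κ * ‖x‖)) * Real.cos (ω₀ * t) / ‖x‖) :
    ∀ (t : ℝ) (x : EuclideanSpace ℝ (Fin 3)), x ≠ 0 →
      deriv (deriv fun s => u (s, x)) t - laplacian3 (fun y => u (t, y)) x +
        ν ^ 2 * u (t, x) = 0 := by
  intro t x hx
  have hκ_sq : κ ^ 2 = ν ^ 2 - ω₀ ^ 2 := by
    rw [hκ]
    exact sq_sqrt (by nlinarith)
  have htime : (fun s => u (s, x)) = fun s => exp (-(κ * ‖x‖)) / ‖x‖ * cos (ω₀ * s) :=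
    funext fun s => by rw [hu]; ring
  have hspace : (fun y => u (t, y)) = fun y => exp (-(κ * ‖y‖)) * cos (ω₀ * t) / ‖y‖ :=
    funext (hu t)
  rw [htime, deriv_deriv_mul_cos_mul, hspace, laplacian3_yukawa _ _ hx, hu, hκ_sq]
  ring
end
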